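/- (Lemma 4.3 of the paper.) Let 𝒫_sup ⊂ ℝ^p be compact with positive Lebesgue measure, 𝒯_sup = [0,T] with T > 0, and let u : 𝒫_sup × 𝒯_sup → ℝ^{N_h} be continuous. Fix N ≤ N_h and let V_∞ ∈ ℝ^{N_h×N} be a semi-orthogonal minimizer of ∫_{𝒫_sup × 𝒯_sup} ‖u(z) − W Wᵀ u(z)‖² dz over semi-orthogonal matrices W. Then there exists a sampling strategy — namely μ_1, …, μ_{N_s} drawn i.i.d. uniformly on 𝒫_sup and the equispaced time grid t_k = kT/N_t, k = 1, …, N_t — such that, letting V = V(N_s, N_t) ∈ ℝ^{N_h×N} be a semi-orthogonal minimizer of (|𝒫_sup × 𝒯_sup|/(N_s N_t)) Σ_{j=1}^{N_s} Σ_{k=1}^{N_t} ‖u(μ_j, t_k) − W Wᵀ u(μ_j, t_k)‖² over semi-orthogonal W, the POD generalization error ℰ^gen_POD(𝒫_sup × 𝒯_sup; N_s, N_t) = ∫_{𝒫_sup × 𝒯_sup} ( ‖u(z) − V Vᵀ u(z)‖² − ‖u(z) − V_∞ V_∞ᵀ u(z)‖² ) dz converges to 0 almost surely as N_s, N_t →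 ∞ (e.g. along N_s = N_t = n → ∞). -/

import Mathlib

open Matrix MeasureTheory Filter ProbabilityTheory Topology

/-- Identification of a plain tuple in `ℝ^n` with an element of `EuclideanSpace ℝ (Fin n)`,
so that `‖·‖` denotes the Euclidean norm. -/
def toEuc {n : ℕ} (x : Fin n → ℝ) : EuclideanSpace ℝ (Fin n) := WithLp.toLp 2 x

/-- The empirical mean squared POD projection error
`(|P × [0,T]|/n²) ∑_{j=1}^{n} ∑_{k=1}^{n} ‖u(μ_j, kT/n) − W Wᵀ u(μ_j, kT/n)‖²`
associated with sampled parameters `μs 0, …, μs (n-1)`, the equispaced time grid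
`t_k = kT/n`, and a matrix `W`. -/
noncomputable def empiricalPODError {p Nh N : ℕ} (P : Set (Fin p → ℝ)) (T : ℝ)
    (u : (Fin p → ℝ) × ℝ → EuclideanSpace ℝ (Fin Nh))
    (μs : ℕ → (Fin p → ℝ)) (n : ℕ) (W : Matrix (Fin Nh) (Fin N) ℝ) : ℝ :=
  ((volume (P ×ˢ Set.Icc 0 T)).toReal / (n * n : ℝ)) *
    ∑ j ∈ Finset.range n, ∑ k ∈ Finset.range n,
      ‖u (μs j, ((k : ℝ) + 1) * T / n)
        - toEuc (W.mulVec (Wᵀ.mulVec (u (μs j, ((k : ℝ) + 1) * T / n))))‖ ^ 2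

/-!
For semi-orthogonal `W`, the matrix `1 - W Wᵀ` is a symmetric idempotent, so
`‖x - W Wᵀ x‖² = ∑_{a,b} (1 - W Wᵀ)_{ab} x_a x_b` with every `|(1 - W Wᵀ)_{ab}| ≤ 1`.
Hence the continuous and the empirical POD errors are the same bounded linear combination of
the second moments `∫ u_a u_b`, resp. of their empirical means, and differ by at most
`∑_{a,b} |∫ u_a u_b - empirical mean|`, uniformly in `W`. Each empirical mean converges almost
surely: the time sums are Riemann sums converging uniformly in the parameter, and the average
over the i.i.d. parameters then converges by the strong law of large numbers. Finally, the
generalization error of a minimizer of a uniformly close functional lies between `0` and twice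
the uniform deviation.
-/

namespace Matrix

theorem abs_apply_le_one_of_isSymm_of_isIdempotentElem {n : Type*} [Fintype n]
    {M : Matrix n n ℝ} (hsymm : M.IsSymm) (hidem : IsIdempotentElem M) (a b : n) :
    |M a b| ≤ 1 := by
  have hdiag : M a a = ∑ c, M a c ^ 2 := by
    conv_lhs => rw [← hidem.eq, mul_apply]
    simp only [hsymm.apply a, sq]
  have hle : ∀ c, M a c ^ 2 ≤ M a a := fun c =>
    hdiag ▸ Finset.single_le_sum (fun c _ => sq_nonneg (M a c)) (Finset.mem_univ c)
  have hdiag_le_one : M a a ≤ 1 := by nlinarith [hle a]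
  exact sq_le_one_iff_abs_le_one _ |>.1 ((hle b).trans hdiag_le_one)

theorem isSymm_one_sub_mul_transpose_self {m n : Type*} [Fintype n] [DecidableEq m]
    (W : Matrix m n ℝ) : (1 - W * Wᵀ).IsSymm :=
  isSymm_one.sub (transpose_mul _ _)

theorem isIdempotentElem_one_sub_mul_transpose_self {m n : Type*} [Fintype m] [Fintype n]
    [DecidableEq m] [DecidableEq n] {W : Matrix m n ℝ} (hW : Wᵀ * W = 1) :
    IsIdempotentElem (1 - W * Wᵀ) := by
  refine IsIdempotentElem.one_sub ?_
  rw [IsIdempotentElem, Matrix.mul_assoc, ← Matrix.mul_assoc Wᵀ, hW, Matrix.one_mul]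

theorem dotProduct_mulVec_eq_sum {m : Type*} [Fintype m] (M : Matrix m m ℝ) (x : m → ℝ) :
    x ⬝ᵥ (M *ᵥ x) = ∑ q : m × m, M q.1 q.2 * (x q.1 * x q.2) := by
  simp only [dotProduct, mulVec, Finset.mul_sum, Fintype.sum_prod_type]
  exact Finset.sum_congr rfl fun _ _ => Finset.sum_congr rfl fun _ _ => by ring

theorem mulVec_dotProduct_mulVec_self {m : Type*} [Fintype m] {M : Matrix m m ℝ}
    (hsymm : M.IsSymm) (hidem : IsIdempotentElem M) (x : m → ℝ) :
    (M *ᵥ x) ⬝ᵥ (M *ᵥ x) = x ⬝ᵥ (M *ᵥ x) := by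
  rw [dotProduct_mulVec, ← mulVec_transpose, hsymm.eq, mulVec_mulVec, hidem.eq, dotProduct_comm]

end Matrix

theorem norm_sub_mulVec_mulVec_transpose_sq {m n : Type*} [Fintype m] [Fintype n]
    [DecidableEq m] [DecidableEq n] {W : Matrix m n ℝ} (hW : Wᵀ * W = 1)
    (x : EuclideanSpace ℝ m) :
    ‖x - WithLp.toLp 2 (W *ᵥ Wᵀ *ᵥ x)‖ ^ 2
      = ∑ q : m × m, (1 - W * Wᵀ : Matrix m m ℝ) q.1 q.2 * (x q.1 * x q.2) := by
  have hsub : x - WithLp.toLp 2 (W *ᵥ Wᵀ *ᵥ x) = WithLp.toLp 2 ((1 - W * Wᵀ) *ᵥ x) := by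
    ext i
    simp [sub_mulVec, mulVec_mulVec]
  rw [hsub, EuclideanSpace.norm_sq_eq]
  simp only [Real.norm_eq_abs, sq_abs]
  simp only [sq]
  rw [← dotProduct, mulVec_dotProduct_mulVec_self (isSymm_one_sub_mul_transpose_self W)
    (isIdempotentElem_one_sub_mul_transpose_self hW), dotProduct_mulVec_eq_sum]

section RiemannSums

open Set Finset

theorem abs_riemannSum_sub_integral_le {f : ℝ → ℝ} {T ε : ℝ} {n : ℕ} (hT : 0 ≤ T) (hn : n ≠ 0)
    (hf : IntegrableOn f (Icc 0 T))
    (hosc : ∀ s ∈ Icc 0 T, ∀ t ∈ Icc 0 T, |s - t| ≤ T / n → |f s - f t| ≤ ε) :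
    |T / n * ∑ k ∈ range n, f ((k + 1) * T / n) - ∫ t in Icc 0 T, f t| ≤ T * ε := by
  have hn' : (0 : ℝ) < n := by positivity
  set a : ℕ → ℝ := fun k => k * T / n with ha
  have ha_succ (k : ℕ) : a (k + 1) - a k = T / n := by simp only [ha]; push_cast; ring
  have ha_le (k : ℕ) : a k ≤ a (k + 1) := by linarith [ha_succ k, div_nonneg hT hn'.le]
  have ha_mem {k : ℕ} (hk : k ≤ n) : a k ∈ Icc 0 T := by
    refine ⟨by positivity, div_le_of_le_mul₀ hn'.le hT ?_⟩
    rw [mul_comm]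
    exact mul_le_mul_of_nonneg_left (by exact_mod_cast hk) hT
  have hsub {k : ℕ} (hk : k < n) : Icc (a k) (a (k + 1)) ⊆ Icc 0 T :=
    Icc_subset_Icc (ha_mem hk.le).1 (ha_mem hk).2
  have hpiece_int {k : ℕ} (hk : k < n) : IntervalIntegrable f volume (a k) (a (k + 1)) :=
    (hf.mono_set (uIcc_of_le (ha_le k) ▸ hsub hk)).intervalIntegrable
  have hpiece {k : ℕ} (hk : k < n) :
      |T / n * f (a (k + 1)) - ∫ t in a k..a (k + 1), f t| ≤ T / n * ε := by
    have hconst : T / n * f (a (k + 1)) = ∫ _ in a k..a (k + 1), f (a (k + 1)) := by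
      rw [intervalIntegral.integral_const, ha_succ, smul_eq_mul]
    rw [hconst, ← intervalIntegral.integral_sub intervalIntegrable_const (hpiece_int hk),
      ← Real.norm_eq_abs, ← abs_of_nonneg (div_nonneg hT hn'.le), ← ha_succ, mul_comm]
    refine intervalIntegral.norm_integral_le_of_norm_le_const fun t ht => ?_
    rw [uIoc_of_le (ha_le k)] at ht
    refine hosc _ (hsub hk ⟨ha_le k, le_rfl⟩) _ (hsub hk (Ioc_subset_Icc_self ht)) ?_
    rw [abs_of_nonneg (by linarith [ht.2]), ← ha_succ k]
    linarith [ht.1]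
  have hintegral : ∫ t in Icc 0 T, f t = ∑ k ∈ range n, ∫ t in a k..a (k + 1), f t := by
    have ha_zero : a 0 = 0 := by simp [ha]
    have ha_n : a n = T := mul_div_cancel_left₀ T hn'.ne'
    rw [intervalIntegral.sum_integral_adjacent_intervals (a := a) fun k hk => hpiece_int hk,
      ha_zero, ha_n, intervalIntegral.integral_of_le hT, integral_Icc_eq_integral_Ioc]
  calc |T / n * ∑ k ∈ range n, f ((k + 1) * T / n) - ∫ t in Icc 0 T, f t|
      = |∑ k ∈ range n, (T / n * f (a (k + 1)) - ∫ t in a k..a (k + 1), f t)| := by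
        simp [hintegral, ha, mul_sum]
    _ ≤ ∑ k ∈ range n, T / n * ε :=
        (abs_sum_le_sum_abs _ _).trans (sum_le_sum fun k hk => hpiece (mem_range.1 hk))
    _ = T * ε := by
        rw [sum_const, card_range, nsmul_eq_mul]
        field_simp

theorem tendstoUniformlyOn_riemannSum {α : Type*} [PseudoMetricSpace α] {P : Set α}
    (hP : IsCompact P) {T : ℝ} (hT : 0 ≤ T) {g : α × ℝ → ℝ}
    (hg : ContinuousOn g (P ×ˢ Icc 0 T)) :
    TendstoUniformlyOn (fun (n : ℕ) x => T / n * ∑ k ∈ range n, g (x, (k + 1) * T / n))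
      (fun x => ∫ t in Icc 0 T, g (x, t)) atTop P := by
  rw [Metric.tendstoUniformlyOn_iff]
  intro ε hε
  have hε' : 0 < ε / (T + 1) := by positivity
  obtain ⟨δ, hδ, hgδ⟩ := Metric.uniformContinuousOn_iff.1
    ((hP.prod isCompact_Icc).uniformContinuousOn_of_continuous hg) _ hε'
  filter_upwards [(tendsto_const_div_atTop_nhds_zero_nat T).eventually (gt_mem_nhds hδ),
    eventually_ne_atTop 0] with n hmesh hn x hx
  have hslice : ContinuousOn (fun t => g (x, t)) (Icc 0 T) :=
    hg.comp (continuousOn_const.prodMk continuousOn_id) fun t ht => ⟨hx, ht⟩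
  have hosc : ∀ s ∈ Icc 0 T, ∀ t ∈ Icc 0 T, |s - t| ≤ T / n →
      |g (x, s) - g (x, t)| ≤ ε / (T + 1) := by
    intro s hs t ht hst
    refine (hgδ _ ⟨hx, hs⟩ _ ⟨hx, ht⟩ ?_).le
    rw [Prod.dist_eq, dist_self, Real.dist_eq]
    exact max_lt hδ (hst.trans_lt hmesh)
  rw [Real.dist_eq, abs_sub_comm]
  calc _ ≤ T * (ε / (T + 1)) :=
        abs_riemannSum_sub_integral_le hT hn (hslice.integrableOn_compact isCompact_Icc) hosc
    _ < ε := by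
        rw [mul_div_assoc', div_lt_iff₀ (by linarith)]
        nlinarith

end RiemannSums

section UniformSampling

open Finset

theorem Filter.Tendsto.average_of_tendstoUniformlyOn {α : Type*} {F : ℕ → α → ℝ} {f : α → ℝ}
    {s : Set α} (hF : TendstoUniformlyOn F f atTop s) {x : ℕ → α} (hx : ∀ j, x j ∈ s) {L : ℝ}
    (hL : Tendsto (fun n : ℕ => (∑ j ∈ range n, f (x j)) / n) atTop (𝓝 L)) :
    Tendsto (fun n : ℕ => (∑ j ∈ range n, F n (x j)) / n) atTop (𝓝 L) := by
  have herr : Tendsto (fun n : ℕ => (∑ j ∈ range n, (F n (x j) - f (x j))) / n) atTop (𝓝 0) := by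
    refine Metric.tendsto_nhds.2 fun ε hε => ?_
    filter_upwards [Metric.tendstoUniformlyOn_iff.1 hF (ε / 2) (half_pos hε)] with n hn
    have hsum : |∑ j ∈ range n, (F n (x j) - f (x j))| ≤ ε / 2 * n := by
      calc _ ≤ ∑ j ∈ range n, |F n (x j) - f (x j)| := abs_sum_le_sum_abs _ _
        _ ≤ ∑ _j ∈ range n, ε / 2 := sum_le_sum fun j _ => by
              rw [← Real.dist_eq, dist_comm]; exact (hn _ (hx j)).le
        _ = ε / 2 * n := by rw [sum_const, card_range, nsmul_eq_mul, mul_comm]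
    rw [Real.dist_0_eq_abs, abs_div, Nat.abs_cast]
    exact (div_le_of_le_mul₀ n.cast_nonneg (half_pos hε).le hsum).trans_lt (half_lt_self hε)
  simpa [sum_sub_distrib, sub_div] using herr.add hL

theorem ae_mem_of_map_eq_smul_restrict {α Ω : Type*} [MeasurableSpace α] [MeasurableSpace Ω]
    {π : Measure Ω} {ν : Measure α} {P : Set α} (hPm : MeasurableSet P) {c : ENNReal}
    {X : Ω → α} (hX : Measurable X) (hmap : Measure.map X π = c • ν.restrict P) :
    ∀ᵐ ω ∂π, X ω ∈ P := by
  change π (X ⁻¹' Pᶜ) = 0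
  rw [← Measure.map_apply hX hPm.compl, hmap]
  simp [Measure.restrict_apply hPm.compl]

theorem ae_tendsto_average_of_map_eq_uniform {α Ω : Type*} [MeasurableSpace α] [MeasurableSpace Ω]
    {π : Measure Ω} {ν : Measure α} {P : Set α} (hPpos : ν P ≠ 0) {X : ℕ → Ω → α}
    (hmeas : ∀ j, Measurable (X j)) (hindep : iIndepFun X π)
    (hunif : ∀ j, Measure.map (X j) π = (ν P)⁻¹ • ν.restrict P) {φ : α → ℝ}
    (hφm : Measurable φ) (hφ : IntegrableOn φ P ν) :
    ∀ᵐ ω ∂π, Tendsto (fun n : ℕ => (∑ j ∈ range n, φ (X j ω)) / n) atTop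
      (𝓝 ((ν P).toReal⁻¹ * ∫ x in P, φ x ∂ν)) := by
  have hint : Integrable (φ ∘ X 0) π := by
    rw [← integrable_map_measure hφm.aestronglyMeasurable (hmeas 0).aemeasurable, hunif 0]
    exact hφ.smul_measure (ENNReal.inv_ne_top.2 hPpos)
  have hmean : ∫ ω, φ (X 0 ω) ∂π = (ν P).toReal⁻¹ * ∫ x in P, φ x ∂ν := by
    rw [← integral_map (hmeas 0).aemeasurable hφm.aestronglyMeasurable, hunif 0,
      integral_smul_measure, ENNReal.toReal_inv, smul_eq_mul]
  have hident (j : ℕ) : IdentDistrib (φ ∘ X j) (φ ∘ X 0) π π :=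
    (IdentDistrib.mk (hmeas j).aemeasurable (hmeas 0).aemeasurable
      (by rw [hunif, hunif])).comp hφm
  have hpair : Pairwise fun i j => IndepFun (φ ∘ X i) (φ ∘ X j) π := fun i j hij =>
    (hindep.indepFun hij).comp hφm hφm
  simpa [hmean] using strong_law_ae_real (fun j => φ ∘ X j) hint hpair hident

end UniformSampling

noncomputable def empiricalMean {p : ℕ} (P : Set (Fin p → ℝ)) (T : ℝ) (μs : ℕ → (Fin p → ℝ))
    (n : ℕ) (g : (Fin p → ℝ) × ℝ → ℝ) : ℝ :=
  ((volume (P ×ˢ Set.Icc 0 T)).toReal / (n * n : ℝ)) *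
    ∑ j ∈ Finset.range n, ∑ k ∈ Finset.range n, g (μs j, ((k : ℝ) + 1) * T / n)

section MonteCarlo

open Set Finset

variable {p : ℕ} {P : Set (Fin p → ℝ)} {T : ℝ} {Ω : Type*} [MeasureSpace Ω]
  {μ : ℕ → Ω → (Fin p → ℝ)}

theorem empiricalMean_eq_mul_average (hT : 0 ≤ T) (μs : ℕ → (Fin p → ℝ)) (n : ℕ)
    (g : (Fin p → ℝ) × ℝ → ℝ) :
    empiricalMean P T μs n g = (volume P).toReal *
      ((∑ j ∈ range n, T / n * ∑ k ∈ range n, g (μs j, (k + 1) * T / n)) / n) := by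
  rw [empiricalMean, Measure.volume_eq_prod, Measure.prod_prod, Real.volume_Icc, sub_zero,
    ENNReal.toReal_mul, ENNReal.toReal_ofReal hT, ← mul_sum]
  ring

theorem ae_tendsto_empiricalMean_of_continuous (hP : IsCompact P) (hPpos : volume P ≠ 0)
    (hT : 0 ≤ T) (hmeas : ∀ j, Measurable (μ j)) (hindep : iIndepFun μ ℙ)
    (hunif : ∀ j, Measure.map (μ j) ℙ = (volume P)⁻¹ • volume.restrict P)
    {g : (Fin p → ℝ) × ℝ → ℝ} (hg : Continuous g) :
    ∀ᵐ ω, Tendsto (fun n => empiricalMean P T (fun j => μ j ω) n g) atTop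
      (𝓝 (∫ z in P ×ˢ Icc 0 T, g z)) := by
  have hgD : IntegrableOn g (P ×ˢ Icc 0 T) (volume.prod volume) :=
    hg.continuousOn.integrableOn_compact (hP.prod isCompact_Icc)
  have hsection : IntegrableOn (fun x => ∫ t in Icc 0 T, g (x, t)) P := by
    rw [IntegrableOn, ← Measure.prod_restrict] at hgD
    exact hgD.integral_prod_left
  have hfubini : ∫ z in P ×ˢ Icc 0 T, g z = ∫ x in P, ∫ t in Icc 0 T, g (x, t) :=
    setIntegral_prod g hgD
  have hvol : (volume P).toReal ≠ 0 := ENNReal.toReal_ne_zero.2 ⟨hPpos, hP.measure_lt_top.ne⟩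
  have hslln := ae_tendsto_average_of_map_eq_uniform hPpos hmeas hindep hunif
    hg.stronglyMeasurable.integral_prod_right'.measurable hsection
  filter_upwards [hslln, ae_all_iff.2 fun j =>
    ae_mem_of_map_eq_smul_restrict hP.measurableSet (hmeas j) (hunif j)] with ω hω hmem
  have hriemann := hω.average_of_tendstoUniformlyOn
    (tendstoUniformlyOn_riemannSum hP hT hg.continuousOn) hmem
  simp_rw [empiricalMean_eq_mul_average hT]
  convert hriemann.const_mul (volume P).toReal using 2
  rw [hfubini, ← mul_assoc, mul_inv_cancel₀ hvol, one_mul]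

theorem empiricalMean_congr (hT : 0 ≤ T) {μs : ℕ → (Fin p → ℝ)} (hμs : ∀ j, μs j ∈ P)
    {f g : (Fin p → ℝ) × ℝ → ℝ} (hfg : EqOn f g (P ×ˢ Icc 0 T)) (n : ℕ) :
    empiricalMean P T μs n f = empiricalMean P T μs n g := by
  unfold empiricalMean
  refine congrArg _ (sum_congr rfl fun j _ => sum_congr rfl fun k hk => hfg ⟨hμs j, ?_⟩)
  have hn : (0 : ℝ) < n := Nat.cast_pos.2 (Nat.zero_lt_of_lt (mem_range.1 hk))
  have hk' : (k : ℝ) + 1 ≤ n := by exact_mod_cast mem_range.1 hk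
  refine ⟨by positivity, div_le_of_le_mul₀ hn.le hT ?_⟩
  rw [mul_comm T]
  exact mul_le_mul_of_nonneg_right hk' hT

theorem ae_tendsto_empiricalMean (hP : IsCompact P) (hPpos : volume P ≠ 0)
    (hT : 0 ≤ T) (hmeas : ∀ j, Measurable (μ j)) (hindep : iIndepFun μ ℙ)
    (hunif : ∀ j, Measure.map (μ j) ℙ = (volume P)⁻¹ • volume.restrict P)
    {g : (Fin p → ℝ) × ℝ → ℝ} (hg : ContinuousOn g (P ×ˢ Icc 0 T)) :
    ∀ᵐ ω, Tendsto (fun n => empiricalMean P T (fun j => μ j ω) n g) atTop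
      (𝓝 (∫ z in P ×ˢ Icc 0 T, g z)) := by
  have hD : IsCompact (P ×ˢ Icc 0 T) := hP.prod isCompact_Icc
  -- Tietze: a global continuous extension makes the slice integrals measurable.
  obtain ⟨G, hG⟩ := ContinuousMap.exists_restrict_eq hD.isClosed ⟨_, hg.domRestrict⟩
  have hGg : EqOn G g (P ×ˢ Icc 0 T) := fun z hz => DFunLike.congr_fun hG ⟨z, hz⟩
  filter_upwards [ae_tendsto_empiricalMean_of_continuous hP hPpos hT hmeas hindep hunif
    G.continuous, ae_all_iff.2 fun j =>
    ae_mem_of_map_eq_smul_restrict hP.measurableSet (hmeas j) (hunif j)] with ω hω hmem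
  rw [← setIntegral_congr_fun hD.measurableSet hGg]
  exact hω.congr (empiricalMean_congr hT hmem hGg)

end MonteCarlo

theorem Finset.abs_sum_mul_sub_sum_mul_le {ι : Type*} (s : Finset ι) {c : ι → ℝ}
    (hc : ∀ i ∈ s, |c i| ≤ 1) (a b : ι → ℝ) :
    |∑ i ∈ s, c i * a i - ∑ i ∈ s, c i * b i| ≤ ∑ i ∈ s, |a i - b i| := by
  rw [← sum_sub_distrib]
  refine (abs_sum_le_sum_abs _ _).trans (sum_le_sum fun i hi => ?_)
  rw [← mul_sub, abs_mul]
  exact mul_le_of_le_one_left (abs_nonneg _) (hc i hi)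

theorem tendsto_sub_of_isMinOn_of_abs_sub_le {α : Type*} {S : Set α} {E : α → ℝ}
    {Ê : ℕ → α → ℝ} {δ : ℕ → ℝ} (hδ : Tendsto δ atTop (𝓝 0))
    (hdev : ∀ n, ∀ W ∈ S, |E W - Ê n W| ≤ δ n) {x : ℕ → α} (hx : ∀ n, x n ∈ S)
    (hxmin : ∀ n, IsMinOn (Ê n) S (x n)) {y : α} (hy : y ∈ S) (hymin : IsMinOn E S y) :
    Tendsto (fun n => E (x n) - E y) atTop (𝓝 0) := by
  refine tendsto_of_tendsto_of_tendsto_of_le_of_le tendsto_const_nhds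
    (by simpa using hδ.const_mul 2) (fun n => sub_nonneg.2 (hymin (hx n))) fun n => ?_
  have hx_dev := abs_le.1 (hdev n _ (hx n))
  have hy_dev := abs_le.1 (hdev n _ hy)
  have hmin : Ê n (x n) ≤ Ê n y := hxmin n hy
  dsimp only
  linarith [hx_dev.2, hy_dev.1]

section POD

open Set Finset

variable {p Nh N : ℕ} {P : Set (Fin p → ℝ)} {T : ℝ}

theorem empiricalMean_sum_mul {ι : Type*} (s : Finset ι) (c : ι → ℝ)
    (g : ι → (Fin p → ℝ) × ℝ → ℝ) (μs : ℕ → (Fin p → ℝ)) (n : ℕ) :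
    empiricalMean P T μs n (fun z => ∑ i ∈ s, c i * g i z)
      = ∑ i ∈ s, c i * empiricalMean P T μs n (g i) := by
  simp only [empiricalMean, mul_sum, mul_left_comm _ (c _)]
  exact (sum_congr rfl fun _ _ => sum_comm).trans sum_comm

theorem empiricalPODError_eq_sum {u : (Fin p → ℝ) × ℝ → EuclideanSpace ℝ (Fin Nh)}
    {W : Matrix (Fin Nh) (Fin N) ℝ} (hW : Wᵀ * W = 1) (μs : ℕ → (Fin p → ℝ)) (n : ℕ) :
    empiricalPODError P T u μs n W = ∑ q : Fin Nh × Fin Nh,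
      (1 - W * Wᵀ : Matrix _ _ ℝ) q.1 q.2
        * empiricalMean P T μs n (fun z => u z q.1 * u z q.2) := by
  rw [← empiricalMean_sum_mul]
  exact congrArg (empiricalMean P T μs n)
    (funext fun z => norm_sub_mulVec_mulVec_transpose_sq hW (u z))

theorem integral_norm_sub_mulVec_mulVec_transpose_sq {β : Type*} [MeasurableSpace β]
    {ν : Measure β} {u : β → EuclideanSpace ℝ (Fin Nh)} {W : Matrix (Fin Nh) (Fin N) ℝ}
    (hW : Wᵀ * W = 1) (hu : ∀ q : Fin Nh × Fin Nh, Integrable (fun z => u z q.1 * u z q.2) ν) :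
    ∫ z, ‖u z - toEuc (W *ᵥ Wᵀ *ᵥ u z)‖ ^ 2 ∂ν
      = ∑ q : Fin Nh × Fin Nh,
          (1 - W * Wᵀ : Matrix _ _ ℝ) q.1 q.2 * ∫ z, u z q.1 * u z q.2 ∂ν := by
  simp_rw [toEuc, norm_sub_mulVec_mulVec_transpose_sq hW, ← integral_const_mul]
  exact integral_finsetSum _ fun q _ => (hu q).const_mul _

theorem abs_setIntegral_sub_empiricalPODError_le
    {u : (Fin p → ℝ) × ℝ → EuclideanSpace ℝ (Fin Nh)} {W : Matrix (Fin Nh) (Fin N) ℝ}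
    (hW : Wᵀ * W = 1)
    (hu : ∀ q : Fin Nh × Fin Nh, IntegrableOn (fun z => u z q.1 * u z q.2) (P ×ˢ Icc 0 T))
    (μs : ℕ → (Fin p → ℝ)) (n : ℕ) :
    |(∫ z in P ×ˢ Icc 0 T, ‖u z - toEuc (W *ᵥ Wᵀ *ᵥ u z)‖ ^ 2)
        - empiricalPODError P T u μs n W|
      ≤ ∑ q : Fin Nh × Fin Nh, |(∫ z in P ×ˢ Icc 0 T, u z q.1 * u z q.2)
          - empiricalMean P T μs n (fun z => u z q.1 * u z q.2)| := by
  rw [integral_norm_sub_mulVec_mulVec_transpose_sq hW hu, empiricalPODError_eq_sum hW]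
  exact abs_sum_mul_sub_sum_mul_le _ (fun q _ =>
    Matrix.abs_apply_le_one_of_isSymm_of_isIdempotentElem
      (Matrix.isSymm_one_sub_mul_transpose_self W)
      (Matrix.isIdempotentElem_one_sub_mul_transpose_self hW) q.1 q.2) _ _

end POD

theorem pod_generalization_error_tendsto_zero_general
    {p Nh N : ℕ}
    (P : Set (Fin p → ℝ)) (hP : IsCompact P) (hPpos : 0 < volume P)
    (T : ℝ) (hT : 0 < T)
    (u : (Fin p → ℝ) × ℝ → EuclideanSpace ℝ (Fin Nh))
    (hu : ContinuousOn u (P ×ˢ Set.Icc 0 T))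
    {Ω : Type} [MeasureSpace Ω]
    (μ : ℕ → Ω → (Fin p → ℝ))
    (hmeas : ∀ j, Measurable (μ j))
    (hindep : iIndepFun μ ℙ)
    (hunif : ∀ j, Measure.map (μ j) ℙ = (volume P)⁻¹ • volume.restrict P)
    (Vinf : Matrix (Fin Nh) (Fin N) ℝ)
    (hVinf : Vinfᵀ * Vinf = 1)
    (hVinfmin : ∀ W : Matrix (Fin Nh) (Fin N) ℝ, Wᵀ * W = 1 →
      (∫ z in P ×ˢ Set.Icc 0 T, ‖u z - toEuc (Vinf.mulVec (Vinfᵀ.mulVec (u z)))‖ ^ 2)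
        ≤ ∫ z in P ×ˢ Set.Icc 0 T, ‖u z - toEuc (W.mulVec (Wᵀ.mulVec (u z)))‖ ^ 2)
    (Vn : ℕ → Ω → Matrix (Fin Nh) (Fin N) ℝ)
    (hVn : ∀ n ω, (Vn n ω)ᵀ * Vn n ω = 1)
    (hVnmin : ∀ n ω, ∀ W : Matrix (Fin Nh) (Fin N) ℝ, Wᵀ * W = 1 →
      empiricalPODError P T u (fun j => μ j ω) n (Vn n ω)
        ≤ empiricalPODError P T u (fun j => μ j ω) n W) :
    ∀ᵐ ω : Ω, Tendsto
      (fun n : ℕ =>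
        ∫ z in P ×ˢ Set.Icc 0 T,
          (‖u z - toEuc ((Vn n ω).mulVec ((Vn n ω)ᵀ.mulVec (u z)))‖ ^ 2
            - ‖u z - toEuc (Vinf.mulVec (Vinfᵀ.mulVec (u z)))‖ ^ 2))
      atTop (𝓝 0) := by
  have hD : IsCompact (P ×ˢ Set.Icc 0 T) := hP.prod isCompact_Icc
  have hmoment (q : Fin Nh × Fin Nh) :
      ContinuousOn (fun z => u z q.1 * u z q.2) (P ×ˢ Set.Icc 0 T) :=
    ((EuclideanSpace.proj q.1).continuous.comp_continuousOn hu).mul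
      ((EuclideanSpace.proj q.2).continuous.comp_continuousOn hu)
  have herr (W : Matrix (Fin Nh) (Fin N) ℝ) :
      IntegrableOn (fun z => ‖u z - toEuc (W *ᵥ Wᵀ *ᵥ u z)‖ ^ 2) (P ×ˢ Set.Icc 0 T) := by
    refine ContinuousOn.integrableOn_compact hD ?_
    unfold toEuc
    fun_prop
  filter_upwards [ae_all_iff.2 fun q => ae_tendsto_empiricalMean hP hPpos.ne' hT.le hmeas hindep
    hunif (hmoment q)] with ω hω
  have hδ : Tendsto (fun n => ∑ q : Fin Nh × Fin Nh,
      |(∫ z in P ×ˢ Set.Icc 0 T, u z q.1 * u z q.2)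
        - empiricalMean P T (fun j => μ j ω) n (fun z => u z q.1 * u z q.2)|) atTop (𝓝 0) := by
    simpa using tendsto_finsetSum Finset.univ fun q _ =>
      ((hω q).const_sub (∫ z in P ×ˢ Set.Icc 0 T, u z q.1 * u z q.2)).abs
  refine (tendsto_sub_of_isMinOn_of_abs_sub_le (S := {W | Wᵀ * W = 1}) hδ
    (fun n W hW => abs_setIntegral_sub_empiricalPODError_le hW
      (fun q => (hmoment q).integrableOn_compact hD) _ n)
    (hVn · ω) (fun n => isMinOn_iff.2 (hVnmin n ω)) hVinf (isMinOn_iff.2 hVinfmin)).congr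
    fun n => (integral_sub (herr _) (herr _)).symm

/-- **Lemma 4.3 of the paper.** Let `𝒫_sup ⊂ ℝ^p` be compact with positive Lebesgue
measure, `𝒯_sup = [0,T]` with `T > 0`, and `u` continuous on `𝒫_sup × 𝒯_sup`.  Let
`Vinf` be a semi-orthogonal minimizer of the continuous mean squared projection error,
and for each `n` (with `N_s = N_t = n`) let `Vn n ω` be a semi-orthogonal minimizer of
the empirical error built from `n` parameters drawn i.i.d. uniformly on `𝒫_sup` and the
equispaced time grid `t_k = kT/n`.  Then the POD generalization error
`ℰ^gen_POD(𝒫_sup × 𝒯_sup; n, n) = ∫ (‖u − Vn Vnᵀ u‖² − ‖u − Vinf Vinfᵀ u‖²)`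
converges to `0` almost surely as `n → ∞`. -/
theorem pod_generalization_error_tendsto_zero
    {p Nh N : ℕ} (hNle : N ≤ Nh)
    (P : Set (Fin p → ℝ)) (hP : IsCompact P) (hPpos : 0 < volume P)
    (T : ℝ) (hT : 0 < T)
    (u : (Fin p → ℝ) × ℝ → EuclideanSpace ℝ (Fin Nh))
    (hu : ContinuousOn u (P ×ˢ Set.Icc 0 T))
    {Ω : Type} [MeasureSpace Ω] [IsProbabilityMeasure (ℙ : Measure Ω)]
    (μ : ℕ → Ω → (Fin p → ℝ))
    (hmeas : ∀ j, Measurable (μ j))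
    (hindep : iIndepFun μ ℙ)
    (hunif : ∀ j, Measure.map (μ j) ℙ = (volume P)⁻¹ • volume.restrict P)
    (Vinf : Matrix (Fin Nh) (Fin N) ℝ)
    (hVinf : Vinfᵀ * Vinf = 1)
    (hVinfmin : ∀ W : Matrix (Fin Nh) (Fin N) ℝ, Wᵀ * W = 1 →
      (∫ z in P ×ˢ Set.Icc 0 T, ‖u z - toEuc (Vinf.mulVec (Vinfᵀ.mulVec (u z)))‖ ^ 2)
        ≤ ∫ z in P ×ˢ Set.Icc 0 T, ‖u z - toEuc (W.mulVec (Wᵀ.mulVec (u z)))‖ ^ 2)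
    (Vn : ℕ → Ω → Matrix (Fin Nh) (Fin N) ℝ)
    (hVn : ∀ n ω, (Vn n ω)ᵀ * Vn n ω = 1)
    (hVnmin : ∀ n ω, ∀ W : Matrix (Fin Nh) (Fin N) ℝ, Wᵀ * W = 1 →
      empiricalPODError P T u (fun j => μ j ω) n (Vn n ω)
        ≤ empiricalPODError P T u (fun j => μ j ω) n W) :
    ∀ᵐ ω : Ω, Tendsto
      (fun n : ℕ =>
        ∫ z in P ×ˢ Set.Icc 0 T,
          (‖u z - toEuc ((Vn n ω).mulVec ((Vn n ω)ᵀ.mulVec (u z)))‖ ^ 2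
            - ‖u z - toEuc (Vinf.mulVec (Vinfᵀ.mulVec (u z)))‖ ^ 2))
      atTop (𝓝 0) :=
  pod_generalization_error_tendsto_zero_general P hP hPpos T hT u hu μ hmeas hindep hunif Vinf hVinf
    hVinfmin Vn hVn hVnmin
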